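/- arXiv:2401.05808 — 2 statements merged into one kernel-verified Lean document; each statement's English description precedes it below -/
import Mathlib

section
/- Let V : ℝ → ℝ be a nonnegative differentiable function, let δ_α, δ_β > 0 and c_β ≥ 0 be real constants, and let τ < τ_e < τ' be real numbers. Suppose V'(t) ≤ -δ_α·V(t) + c_β for all t ∈ [τ, τ_e) and V'(t) ≤ δ_β·V(t) + c_β for all t ∈ [τ_e, τ'). Set Λ = δ_α·(τ_e - τ) - δ_β·(τ' - τ_e). Then V(τ') ≤ (V(τ) - c_β/δ_α)·e^{-Λ} + (c_β/δ_β + c_β/δ_α)·e^{δ_β(τ' - τ_e)} - c_β/δ_β. -/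
open Set Real Filter

lemma slope_freq {V : ℝ → ℝ} (hVdiff : Differentiable ℝ V) :
    ∀ x : ℝ, ∀ r, deriv V x < r → ∃ᶠ z in nhdsWithin x (Ioi x), (z - x)⁻¹ * (V z - V x) < r := by
  intro x r hr
  have h := (hVdiff x).hasDerivAt
  rw [hasDerivAt_iff_tendsto_slope] at h
  have h2 : Tendsto (slope V x) (nhdsWithin x (Ioi x)) (nhds (deriv V x)) :=
    h.mono_left (nhdsWithin_mono x (by intro z hz; exact ne_of_gt hz))
  have := (h2.eventually (Filter.Tendsto.eventually_lt_const hr (tendsto_id)))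
  refine ((h2.eventually (eventually_lt_nhds hr)).mono ?_).frequently
  intro z hz
  simpa [slope_def_field, div_eq_inv_mul] using hz

/-- One-cycle (ON followed by OFF) composition bound, first inequality in equation (13). -/
theorem stmt_2 (V : ℝ → ℝ) (hVdiff : Differentiable ℝ V) (hVnn : ∀ t, 0 ≤ V t)
    (δa δb cb : ℝ) (hδa : 0 < δa) (hδb : 0 < δb) (hcb : 0 ≤ cb)
    (τ τe τ' : ℝ) (h1 : τ < τe) (h2 : τe < τ')
    (hon : ∀ t ∈ Set.Ico τ τe, deriv V t ≤ -δa * V t + cb)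
    (hoff : ∀ t ∈ Set.Ico τe τ', deriv V t ≤ δb * V t + cb) :
    V τ' ≤ (V τ - cb / δa) * Real.exp (-(δa * (τe - τ) - δb * (τ' - τe)))
      + (cb / δb + cb / δa) * Real.exp (δb * (τ' - τe)) - cb / δb := by
  have hcont : ∀ a b : ℝ, ContinuousOn V (Icc a b) := fun a b =>
    hVdiff.continuous.continuousOn
  have hOn := le_gronwallBound_of_liminf_deriv_right_le (f' := deriv V)
    (hcont τ τe) (fun x _ => slope_freq hVdiff x) (le_refl (V τ)) hon τe (right_mem_Icc.2 h1.le)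
  have hOff := le_gronwallBound_of_liminf_deriv_right_le (f' := deriv V)
    (hcont τe τ') (fun x _ => slope_freq hVdiff x) (le_refl (V τe)) hoff τ' (right_mem_Icc.2 h2.le)
  rw [gronwallBound_of_K_ne_0 (by positivity : (δb:ℝ) ≠ 0)] at hOff
  rw [gronwallBound_of_K_ne_0 (by simp [ne_of_gt hδa] : (-δa:ℝ) ≠ 0)] at hOn
  simp only at hOn hOff
  have hE : (0:ℝ) < Real.exp (δb * (τ' - τe)) := Real.exp_pos _
  have key : V τ' ≤ (V τ * Real.exp (-δa * (τe - τ)) + cb / (-δa) * (Real.exp (-δa * (τe - τ)) - 1))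
      * Real.exp (δb * (τ' - τe)) + cb / δb * (Real.exp (δb * (τ' - τe)) - 1) := by
    refine hOff.trans ?_
    have := mul_le_mul_of_nonneg_right hOn hE.le
    linarith
  have hexp : Real.exp (-δa * (τe - τ)) * Real.exp (δb * (τ' - τe))
      = Real.exp (-(δa * (τe - τ) - δb * (τ' - τe))) := by
    rw [← Real.exp_add]; ring_nf
  refine key.trans (le_of_eq ?_)
  rw [← hexp]
  field_simp [hδa.ne', hδb.ne']
  ring
end

section
/- Let δ_α, δ_β, c_β, T, Λ be real constants with δ_α, δ_β, T, Λ > 0 and c_β ≥ 0. Let (τ^{[κ]})_{κ∈ℕ} and (τ^{[κ,e]})_{κ∈ℕ} be real sequences with τ^{[0]} = 0, τ^{[κ]} < τ^{[κ,e]} < τ^{[κ+1]}, τ^{[κ+1]} - τ^{[κ]} ≤ T, and δ_α·(τ^{[κ,e]} - τ^{[κ]}) - δ_β·(τ^{[κ+1]} - τ^{[κ,e]}) ≥ Λ for all κ ∈ ℕ. Let V : ℝ → ℝ be a nonnegative differentiable function satisfying V'(t) ≤ -δ_α·V(t) + c_β for all t ∈ [τ^{[κ]}, τ^{[κ,e]})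 and V'(t) ≤ δ_β·V(t) + c_β for all t ∈ [τ^{[κ,e]}, τ^{[κ+1]}), for every κ ∈ ℕ. Then there exist constants π* ≥ 0 and ε* ≥ 0 such that V(t) ≤ π*·e^{-(Λ/T)·t} + ε* for all t ≥ 0. -/
set_option maxHeartbeats 1000000 in
/-- Deterministic core of Theorem 1 (culminating in equation (18)): a nonnegative Lyapunov
function decaying at rate `δ_α` (offset `c_β`) on ON intervals `[τ^{[κ]}, τ^{[κ,e]})` and growing
at most at rate `δ_β` (offset `c_β`) on OFF intervals `[τ^{[κ,e]}, τ^{[κ+1]})`, under the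
dwell-time condition `δ_α·𝒢^{[κ]} - δ_β·𝒞^{[κ]} ≥ Λ > 0` and cycle-length bound `T^{[κ]} ≤ T`,
converges exponentially at rate `Λ/T` to a bounded residual set. -/
theorem stmt_6 (δa δb cb T Λ : ℝ) (hδa : 0 < δa) (hδb : 0 < δb) (hcb : 0 ≤ cb)
    (hT : 0 < T) (hΛ : 0 < Λ)
    (τ τe : ℕ → ℝ) (hτ0 : τ 0 = 0)
    (horder : ∀ κ, τ κ < τe κ ∧ τe κ < τ (κ + 1))
    (hcycle : ∀ κ, τ (κ + 1) - τ κ ≤ T)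
    (hdwell : ∀ κ, Λ ≤ δa * (τe κ - τ κ) - δb * (τ (κ + 1) - τe κ))
    (V : ℝ → ℝ) (hVdiff : Differentiable ℝ V) (hVnn : ∀ t, 0 ≤ V t)
    (hon : ∀ κ, ∀ t ∈ Set.Ico (τ κ) (τe κ), deriv V t ≤ -δa * V t + cb)
    (hoff : ∀ κ, ∀ t ∈ Set.Ico (τe κ) (τ (κ + 1)), deriv V t ≤ δb * V t + cb) :
    ∃ πs εs : ℝ, 0 ≤ πs ∧ 0 ≤ εs ∧
      ∀ t : ℝ, 0 ≤ t → V t ≤ πs * Real.exp (-(Λ / T) * t) + εs := by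
  classical
  obtain ⟨E, hE⟩ : ∃ E : ℝ, E = Real.exp (δa * T) := ⟨_, rfl⟩
  have hE0 : 0 < E := by rw [hE]; exact Real.exp_pos _
  have hE1 : 1 ≤ E := by rw [hE]; exact Real.one_le_exp (by positivity)
  obtain ⟨B, hB⟩ : ∃ B : ℝ, B = cb / δa + cb / δb := ⟨_, rfl⟩
  have hB0 : 0 ≤ B := by rw [hB]; positivity
  obtain ⟨M, hM⟩ : ∃ M : ℝ, M = B * E := ⟨_, rfl⟩
  have hM0 : 0 ≤ M := by rw [hM]; exact mul_nonneg hB0 hE0.le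
  have heΛ : Real.exp (-Λ) < 1 := by rw [Real.exp_lt_one_iff]; linarith
  have heΛ0 : 0 < Real.exp (-Λ) := Real.exp_pos _
  obtain ⟨R, hR⟩ : ∃ R : ℝ, R = M / (1 - Real.exp (-Λ)) := ⟨_, rfl⟩
  have hR0 : 0 ≤ R := by rw [hR]; exact div_nonneg hM0 (by linarith)
  have h3a : 0 ≤ cb / δa := by positivity
  have h3b : 0 ≤ cb / δb := by positivity
  -- Grönwall helper
  have gron : ∀ (a b K : ℝ), (∀ x ∈ Set.Ico a b, deriv V x ≤ K * V x + cb) →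
      ∀ x ∈ Set.Icc a b, V x ≤ gronwallBound (V a) K cb (x - a) := by
    intro a b K hbd
    exact le_gronwallBound_of_liminf_deriv_right_le hVdiff.continuous.continuousOn
      (fun x _ r hr => ((hVdiff x).hasDerivAt.hasDerivWithinAt).liminf_right_slope_le hr)
      le_rfl hbd
  -- ON-interval bound
  have onb : ∀ κ, ∀ x ∈ Set.Icc (τ κ) (τe κ),
      V x ≤ V (τ κ) * Real.exp (-δa * (x - τ κ)) + cb / δa := by
    intro κ x hx
    have h := gron (τ κ) (τe κ) (-δa) (hon κ) x hx
    rw [gronwallBound_of_K_ne_0 (by linarith : (-δa : ℝ) ≠ 0)] at h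
    have h1 : Real.exp (-δa * (x - τ κ)) ≤ 1 := by
      apply Real.exp_le_one_iff.mpr
      nlinarith [hx.1]
    have h2 : 0 < Real.exp (-δa * (x - τ κ)) := Real.exp_pos _
    have h4 : cb / -δa = -(cb / δa) := by rw [div_neg]
    rw [h4] at h
    nlinarith
  -- ON-interval coarse bound
  have onb' : ∀ κ, ∀ x ∈ Set.Icc (τ κ) (τe κ), V x ≤ V (τ κ) + cb / δa := by
    intro κ x hx
    have h := onb κ x hx
    have h1 : Real.exp (-δa * (x - τ κ)) ≤ 1 := by
      apply Real.exp_le_one_iff.mpr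
      nlinarith [hx.1]
    have h2 : 0 < Real.exp (-δa * (x - τ κ)) := Real.exp_pos _
    nlinarith [mul_nonneg (hVnn (τ κ)) (by linarith : (0:ℝ) ≤ 1 - Real.exp (-δa * (x - τ κ)))]
  -- OFF-interval bound
  have offb : ∀ κ, ∀ x ∈ Set.Icc (τe κ) (τ (κ + 1)),
      V x ≤ (V (τe κ) + cb / δb) * Real.exp (δb * (x - τe κ)) := by
    intro κ x hx
    have h := gron (τe κ) (τ (κ + 1)) δb (hoff κ) x hx
    rw [gronwallBound_of_K_ne_0 (ne_of_gt hδb)] at h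
    nlinarith [Real.exp_pos (δb * (x - τe κ))]
  -- dwell consequences
  have hCb : ∀ κ, δb * (τ (κ + 1) - τe κ) ≤ δa * T := by
    intro κ
    have h1 := hdwell κ
    have h2 := hcycle κ
    have h3 := (horder κ).2
    have h4 := (horder κ).1
    nlinarith
  -- per-cycle uniform bound
  have cyc : ∀ κ, ∀ x ∈ Set.Icc (τ κ) (τ (κ + 1)), V x ≤ (V (τ κ) + B) * E := by
    intro κ x hx
    have hVκ := hVnn (τ κ)
    have h5 : V (τ κ) + B ≤ (V (τ κ) + B) * E := by
      nlinarith [mul_le_mul_of_nonneg_left hE1 (by linarith : (0:ℝ) ≤ V (τ κ) + B)]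
    rcases le_or_gt x (τe κ) with hxe | hxe
    · have h := onb' κ x ⟨hx.1, hxe⟩
      have : B = cb / δa + cb / δb := hB
      linarith
    · have h := offb κ x ⟨hxe.le, hx.2⟩
      have hVe : V (τe κ) ≤ V (τ κ) + cb / δa := onb' κ (τe κ) ⟨(horder κ).1.le, le_rfl⟩
      have hexE : Real.exp (δb * (x - τe κ)) ≤ E := by
        rw [hE]
        apply Real.exp_le_exp.mpr
        have := hCb κ
        nlinarith [hx.2]
      calc V x ≤ (V (τe κ) + cb / δb) * Real.exp (δb * (x - τe κ)) := h
        _ ≤ (V (τ κ) + B) * E := by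
            apply mul_le_mul (by rw [hB]; linarith) hexE (Real.exp_pos _).le
            linarith
  -- one-cycle contraction
  have step : ∀ κ, V (τ (κ + 1)) ≤ Real.exp (-Λ) * V (τ κ) + M := by
    intro κ
    have h1 := onb κ (τe κ) ⟨(horder κ).1.le, le_rfl⟩
    have h2 := offb κ (τ (κ + 1)) ⟨(horder κ).2.le, le_rfl⟩
    obtain ⟨eG, heG⟩ : ∃ e : ℝ, e = Real.exp (-δa * (τe κ - τ κ)) := ⟨_, rfl⟩
    obtain ⟨eC, heC⟩ : ∃ e : ℝ, e = Real.exp (δb * (τ (κ + 1) - τe κ)) := ⟨_, rfl⟩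
    rw [← heG] at h1
    rw [← heC] at h2
    have heG0 : 0 < eG := by rw [heG]; exact Real.exp_pos _
    have heC0 : 0 < eC := by rw [heC]; exact Real.exp_pos _
    have hprod : eG * eC ≤ Real.exp (-Λ) := by
      rw [heG, heC, ← Real.exp_add]
      apply Real.exp_le_exp.mpr
      have := hdwell κ; linarith
    have heCE : eC ≤ E := by
      rw [heC, hE]; exact Real.exp_le_exp.mpr (hCb κ)
    have hVκ := hVnn (τ κ)
    have hmid : V (τe κ) + cb / δb ≤ V (τ κ) * eG + B := by rw [hB]; linarith
    calc V (τ (κ + 1)) ≤ (V (τe κ) + cb / δb) * eC := h2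
      _ ≤ (V (τ κ) * eG + B) * eC := mul_le_mul_of_nonneg_right hmid heC0.le
      _ = V (τ κ) * (eG * eC) + B * eC := by ring
      _ ≤ Real.exp (-Λ) * V (τ κ) + M := by
          rw [hM]
          nlinarith [mul_le_mul_of_nonneg_left hprod hVκ,
            mul_le_mul_of_nonneg_left heCE hB0]
  -- iterate
  have ind : ∀ κ : ℕ, V (τ κ) ≤ Real.exp (-Λ * κ) * V 0 + R := by
    intro κ
    induction κ with
    | zero => simp [hτ0]; linarith [hR0]
    | succ n ih =>
      have hden : (1 - Real.exp (-Λ)) ≠ 0 := ne_of_gt (by linarith)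
      have key : Real.exp (-Λ) * R + M = R := by
        rw [hR]; field_simp; ring
      have hexp : Real.exp (-Λ) * Real.exp (-Λ * n) = Real.exp (-Λ * (n + 1 : ℕ)) := by
        rw [← Real.exp_add]; push_cast; ring_nf
      have hmul := mul_le_mul_of_nonneg_left ih (Real.exp_pos (-Λ)).le
      calc V (τ (n + 1)) ≤ Real.exp (-Λ) * V (τ n) + M := step n
        _ ≤ Real.exp (-Λ) * (Real.exp (-Λ * n) * V 0 + R) + M := by linarith
        _ = Real.exp (-Λ) * Real.exp (-Λ * n) * V 0 + (Real.exp (-Λ) * R + M) := by ring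
        _ = Real.exp (-Λ * (n + 1 : ℕ)) * V 0 + R := by rw [hexp, key]
  -- τ grows at most linearly
  have hτub : ∀ κ : ℕ, τ κ ≤ κ * T := by
    intro κ
    induction κ with
    | zero => simp [hτ0]
    | succ n ih =>
      have := hcycle n
      push_cast
      push_cast at ih
      linarith
  -- τ grows at least linearly
  have hτlb : ∀ κ : ℕ, (κ : ℝ) * (Λ / δa) ≤ τ κ := by
    intro κ
    induction κ with
    | zero => simp [hτ0]
    | succ n ih =>
      have h1 := hdwell n
      have h2 := (horder n).1
      have h3 := (horder n).2
      have hG : Λ / δa ≤ τe n - τ n := by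
        rw [div_le_iff₀ hδa]
        nlinarith
      push_cast
      linarith
  -- coverage
  have cover : ∀ t : ℝ, 0 ≤ t → ∃ κ, τ κ ≤ t ∧ t < τ (κ + 1) := by
    intro t ht
    have hne : ∃ n, t < τ (n + 1) := by
      obtain ⟨n, hn⟩ := exists_nat_gt (t / (Λ / δa))
      refine ⟨n, ?_⟩
      have hlb := hτlb (n + 1)
      have hpos : 0 < Λ / δa := by positivity
      have hlt : t < (n : ℝ) * (Λ / δa) := by
        rw [div_lt_iff₀ hpos] at hn; linarith
      push_cast at hlb
      nlinarith
    refine ⟨Nat.find hne, ?_, Nat.find_spec hne⟩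
    by_cases h0 : Nat.find hne = 0
    · rw [h0, hτ0]; exact ht
    · obtain ⟨m, hm⟩ := Nat.exists_eq_succ_of_ne_zero h0
      have := Nat.find_min hne (show m < Nat.find hne by omega)
      rw [hm]
      exact not_lt.mp this
  -- final assembly
  refine ⟨E * Real.exp Λ * V 0, E * (R + B),
    mul_nonneg (mul_nonneg hE0.le (Real.exp_pos _).le) (hVnn 0),
    mul_nonneg hE0.le (by linarith), ?_⟩
  intro t ht
  obtain ⟨κ, hk1, hk2⟩ := cover t ht
  have h1 : V t ≤ (V (τ κ) + B) * E := cyc κ t ⟨hk1, hk2.le⟩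
  have h2 : V (τ κ) ≤ Real.exp (-Λ * κ) * V 0 + R := ind κ
  have h3 : t < ((κ : ℝ) + 1) * T := by
    have := hτub (κ + 1); push_cast at this; linarith
  have h4 : Real.exp (-Λ * κ) ≤ Real.exp Λ * Real.exp (-(Λ / T) * t) := by
    rw [← Real.exp_add]
    apply Real.exp_le_exp.mpr
    have h6 : (Λ / T) * t ≤ Λ * ((κ : ℝ) + 1) := by
      rw [div_mul_eq_mul_div, div_le_iff₀ hT]
      nlinarith
    linarith
  have h5 : V (τ κ) + B ≤ Real.exp (-Λ * κ) * V 0 + R + B := by linarith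
  have h7 := mul_le_mul_of_nonneg_right h5 hE0.le
  have h8 := mul_le_mul_of_nonneg_left h4 (mul_nonneg hE0.le (hVnn 0))
  nlinarith
end
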